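/- Let φ be a Leibniz 2-cocycle on the twisted Schrödinger-Virasoro algebra with φ(L_0, Y_n) = φ(Y_n, L_0) = 0 for all n, and φ(L_{-1}, Y_1) = φ(L_1, Y_{-1}) = 0. Then φ(L_m, Y_n) = 0 and φ(Y_n, L_m) = 0 for all m, n ∈ ℤ. -/

import Mathlib

abbrev B : Type := ℤ ⊕ ℤ ⊕ ℤ
abbrev V : Type := B →₀ ℂ

noncomputable def Lg (n : ℤ) : V := Finsupp.single (Sum.inl n) 1
noncomputable def Yg (n : ℤ) : V := Finsupp.single (Sum.inr (Sum.inl n)) 1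
noncomputable def Mg (n : ℤ) : V := Finsupp.single (Sum.inr (Sum.inr n)) 1

/-- Bracket on basis elements of the twisted Schrödinger–Virasoro algebra. -/
noncomputable def brB : B → B → V
  | Sum.inl n, Sum.inl m => ((m : ℂ) - n) • Lg (n + m)
  | Sum.inl n, Sum.inr (Sum.inl m) => ((m : ℂ) - n / 2) • Yg (n + m)
  | Sum.inl n, Sum.inr (Sum.inr p) => (p : ℂ) • Mg (n + p)
  | Sum.inr (Sum.inl m), Sum.inl n => -(((m : ℂ) - n / 2) • Yg (n + m))
  | Sum.inr (Sum.inr p), Sum.inl n => -((p : ℂ) • Mg (n + p))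
  | Sum.inr (Sum.inl m), Sum.inr (Sum.inl m') => ((m' : ℂ) - m) • Mg (m + m')
  | _, _ => 0

/-- The bilinear extension of the bracket to the whole space. -/
noncomputable def bk : V →ₗ[ℂ] V →ₗ[ℂ] V :=
  Finsupp.lsum ℂ fun a => LinearMap.toSpanSingleton ℂ (V →ₗ[ℂ] V)
    (Finsupp.lsum ℂ fun b => LinearMap.toSpanSingleton ℂ V (brB a b))

/-- `φ` is a Leibniz 2-cocycle on the twisted Schrödinger–Virasoro algebra. -/
def IsLeibnizCocycle (φ : V →ₗ[ℂ] V →ₗ[ℂ] ℂ) : Prop :=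
  ∀ x y z : V, φ x (bk y z) = φ (bk x y) z - φ (bk x z) y

/-!
Write `f(a, c) = φ(L_a, Y_c)` and `g(c, b) = φ(Y_c, L_b)`. The cocycle identity on `(L_a, L_0, Y_c)`
and on `(Y_c, L_0, L_b)`, together with `φ(Y_n, L_0) = 0`, shows that `f` and `g` are supported on
the antidiagonal, where `g(-m, m) = -f(m, -m)`. On the antidiagonal, the cocycle identity on
`(L_a, L_b, Y_{-a-b})` becomes a three-term recurrence for `F(m) = f(m, -m)`; with `b = ±1` and
`F(0) = F(±1) = 0` it forces `F(±2) = 0` and then `F(m) = 0` for all `m`.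
-/

lemma bk_single (a b : B) : bk (Finsupp.single a 1) (Finsupp.single b 1) = brB a b := by
  simp [bk, LinearMap.toSpanSingleton_apply]

lemma bk_Lg_Lg (n m : ℤ) : bk (Lg n) (Lg m) = ((m : ℂ) - n) • Lg (n + m) := bk_single _ _

lemma bk_Lg_Yg (n m : ℤ) : bk (Lg n) (Yg m) = ((m : ℂ) - n / 2) • Yg (n + m) := bk_single _ _

lemma bk_Yg_Lg (m n : ℤ) : bk (Yg m) (Lg n) = -(((m : ℂ) - n / 2) • Yg (n + m)) := bk_single _ _

namespace IsLeibnizCocycle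

variable {φ : V →ₗ[ℂ] V →ₗ[ℂ] ℂ} (hco : IsLeibnizCocycle φ)
include hco

lemma apply_Lg_Lg_Yg (a b c : ℤ) :
    ((c : ℂ) - b / 2) * φ (Lg a) (Yg (b + c)) =
      ((b : ℂ) - a) * φ (Lg (a + b)) (Yg c) - ((c : ℂ) - a / 2) * φ (Yg (a + c)) (Lg b) := by
  simpa [bk_Lg_Lg, bk_Lg_Yg] using hco (Lg a) (Lg b) (Yg c)

lemma apply_Yg_Lg_Lg (a b c : ℤ) :
    ((b : ℂ) - a) * φ (Yg c) (Lg (a + b)) =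
      ((c : ℂ) - b / 2) * φ (Yg (b + c)) (Lg a) - ((c : ℂ) - a / 2) * φ (Yg (a + c)) (Lg b) := by
  have h := hco (Yg c) (Lg a) (Lg b)
  simp only [bk_Lg_Lg, bk_Yg_Lg, map_smul, map_neg, LinearMap.smul_apply, LinearMap.neg_apply,
    smul_eq_mul] at h
  linear_combination h

variable (h2 : ∀ n : ℤ, φ (Yg n) (Lg 0) = 0)
include h2

lemma Lg_Yg_eq_zero {a c : ℤ} (hac : a + c ≠ 0) : φ (Lg a) (Yg c) = 0 := by
  have h := hco.apply_Lg_Lg_Yg a 0 c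
  rw [zero_add, add_zero, h2] at h
  refine eq_zero_of_ne_zero_of_mul_left_eq_zero (x := ((a + c : ℤ) : ℂ)) (by exact_mod_cast hac) ?_
  push_cast
  linear_combination h

lemma Yg_Lg_eq_zero {b c : ℤ} (hbc : b + c ≠ 0) : φ (Yg c) (Lg b) = 0 := by
  have h := hco.apply_Yg_Lg_Lg 0 b c
  rw [zero_add, zero_add, h2] at h
  refine eq_zero_of_ne_zero_of_mul_left_eq_zero (x := ((b + c : ℤ) : ℂ)) (by exact_mod_cast hbc) ?_
  push_cast
  linear_combination h

variable (h1 : ∀ n : ℤ, φ (Lg 0) (Yg n) = 0)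
include h1

lemma Yg_neg_Lg (b : ℤ) : φ (Yg (-b)) (Lg b) = -φ (Lg b) (Yg (-b)) := by
  rcases eq_or_ne b 0 with rfl | hb
  · simp [h1, h2]
  have h := hco.apply_Lg_Lg_Yg 0 b (-b)
  rw [zero_add, zero_add, h1] at h
  have hsum : (b : ℂ) * (φ (Yg (-b)) (Lg b) + φ (Lg b) (Yg (-b))) = 0 := by
    push_cast at h
    linear_combination -h
  linear_combination eq_zero_of_ne_zero_of_mul_left_eq_zero (by exact_mod_cast hb) hsum

lemma antidiagonal_recurrence (a b : ℤ) :
    (-(a : ℂ) - 3 * b / 2) * φ (Lg a) (Yg (-a)) =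
      ((b : ℂ) - a) * φ (Lg (a + b)) (Yg (-(a + b))) -
        (3 * (a : ℂ) / 2 + b) * φ (Lg b) (Yg (-b)) := by
  have h := hco.apply_Lg_Lg_Yg a b (-(a + b))
  rw [show b + -(a + b) = -a by ring, show a + -(a + b) = -b by ring,
    hco.Yg_neg_Lg h2 h1 b] at h
  push_cast at h
  linear_combination h

lemma antidiagonal_succ (h4 : φ (Lg 1) (Yg (-1)) = 0) (a : ℤ) :
    (1 - (a : ℂ)) * φ (Lg (a + 1)) (Yg (-(a + 1))) = -((a : ℂ) + 3 / 2) * φ (Lg a) (Yg (-a)) := by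
  have h := hco.antidiagonal_recurrence h2 h1 a 1
  rw [h4] at h
  push_cast at h
  linear_combination -h

lemma antidiagonal_pred (h3 : φ (Lg (-1)) (Yg 1) = 0) (a : ℤ) :
    (-1 - (a : ℂ)) * φ (Lg (a - 1)) (Yg (-(a - 1))) = (3 / 2 - (a : ℂ)) * φ (Lg a) (Yg (-a)) := by
  have h := hco.antidiagonal_recurrence h2 h1 a (-1)
  rw [neg_neg, h3, ← sub_eq_add_neg] at h
  push_cast at h
  linear_combination -h

lemma Lg_Yg_neg_eq_zero (h3 : φ (Lg (-1)) (Yg 1) = 0) (h4 : φ (Lg 1) (Yg (-1)) = 0) (m : ℤ) :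
    φ (Lg m) (Yg (-m)) = 0 := by
  have succ := hco.antidiagonal_succ h2 h1 h4
  have pred := hco.antidiagonal_pred h2 h1 h3
  have at_two : φ (Lg 2) (Yg (-2)) = 0 := by
    have r1 := succ 2
    have r2 := pred 3
    norm_num at r1 r2
    linear_combination (-6 / 5 : ℂ) * r1 - (4 / 5 : ℂ) * r2
  have at_neg_two : φ (Lg (-2)) (Yg 2) = 0 := by
    have r := succ (-2)
    norm_num [h3] at r
    exact r
  rcases le_or_gt 2 m with hm | hm
  · induction m, hm using Int.leInduction with
    | base => exact at_two
    | succ k hk ih =>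
      refine eq_zero_of_ne_zero_of_mul_left_eq_zero (x := 1 - (k : ℂ)) ?_ ?_
      · exact sub_ne_zero.mpr (by exact_mod_cast (by omega : (1 : ℤ) ≠ k))
      · rw [succ k, ih, mul_zero]
  rcases le_or_gt m (-2) with hm' | hm'
  · induction m, hm' using Int.leInductionDown with
    | base => exact at_neg_two
    | pred k hk ih =>
      refine eq_zero_of_ne_zero_of_mul_left_eq_zero (x := -1 - (k : ℂ)) ?_ ?_
      · exact sub_ne_zero.mpr (by exact_mod_cast (by omega : (-1 : ℤ) ≠ k))
      · rw [pred k, ih (by omega), mul_zero]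
  obtain rfl | rfl | rfl : m = -1 ∨ m = 0 ∨ m = 1 := by omega
  · simpa using h3
  · exact h1 _
  · exact h4

end IsLeibnizCocycle

theorem stmt14 (φ : V →ₗ[ℂ] V →ₗ[ℂ] ℂ) (hco : IsLeibnizCocycle φ)
    (h1 : ∀ n : ℤ, φ (Lg 0) (Yg n) = 0) (h2 : ∀ n : ℤ, φ (Yg n) (Lg 0) = 0)
    (h3 : φ (Lg (-1)) (Yg 1) = 0) (h4 : φ (Lg 1) (Yg (-1)) = 0) :
    ∀ m n : ℤ, φ (Lg m) (Yg n) = 0 ∧ φ (Yg n) (Lg m) = 0 := by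
  intro m n
  rcases eq_or_ne (m + n) 0 with hmn | hmn
  · obtain rfl : n = -m := by omega
    have hdiag := hco.Lg_Yg_neg_eq_zero h2 h1 h3 h4 m
    exact ⟨hdiag, by rw [hco.Yg_neg_Lg h2 h1, hdiag, neg_zero]⟩
  · exact ⟨hco.Lg_Yg_eq_zero h2 hmn, hco.Yg_Lg_eq_zero h2 hmn⟩
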